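/- Let P = ((V,E),(V₁,V_R)) be an MDP skeleton, let X be a MEC of P, and let (L, U) be a Rabin pair with L, U ⊆ V. Then there exists an end-component Y of P with Y ⊆ X, Y ∩ L ≠ ∅ and Y ∩ U = ∅ if and only if some MEC of the sub-MDP P[X ∖ Attr(P[X], U ∩ X)] contains a vertex of L. -/
import Mathlib


/-- The subgraph induced on `X` is strongly connected. -/
def SCOn {V : Type*} (E : V → V → Prop) (X : Set V) : Prop :=
  ∀ u ∈ X, ∀ v ∈ X, Relation.ReflTransGen (fun a b => a ∈ X ∧ b ∈ X ∧ E a b) u v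

/-- `Y` is an end-component of the sub-MDP `P[S]` of the MDP skeleton with edges `E`
and random vertices `VR`: `Y ⊆ S`, the induced subgraph is strongly connected with at
least one edge, and edges of `P[S]` leaving random vertices of `Y` stay in `Y`. -/
def IsECIn {V : Type*} (E : V → V → Prop) (VR S Y : Set V) : Prop :=
  Y ⊆ S ∧ SCOn E Y ∧ (∃ a ∈ Y, ∃ b ∈ Y, E a b) ∧
    ∀ v ∈ Y ∩ VR, ∀ w ∈ S, E v w → w ∈ Y

/-- `Y` is a maximal end-component of the sub-MDP `P[S]`. -/
def IsMECIn {V : Type*} (E : V → V → Prop) (VR S Y : Set V) : Prop :=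
  IsECIn E VR S Y ∧ ∀ Z, IsECIn E VR S Z → Y ⊆ Z → Z = Y

/-- `X` is an end-component of the full MDP skeleton. -/
def IsEC {V : Type*} (E : V → V → Prop) (VR X : Set V) : Prop :=
  IsECIn E VR Set.univ X

/-- `X` is a maximal end-component (MEC) of the full MDP skeleton. -/
def IsMEC {V : Type*} (E : V → V → Prop) (VR X : Set V) : Prop :=
  IsEC E VR X ∧ ∀ Y, IsEC E VR Y → X ⊆ Y → Y = X

/-- The random attractor of `W` computed in the sub-MDP `P[S]`. -/
inductive AttrIn {V : Type*} (E : V → V → Prop) (VR S W : Set V) : V → Prop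
  | base {v : V} : v ∈ S → v ∈ W → AttrIn E VR S W v
  | rand {v w : V} : v ∈ S → v ∈ VR → w ∈ S → E v w → AttrIn E VR S W w →
      AttrIn E VR S W v
  | play {v : V} : v ∈ S → v ∉ VR → (∀ w ∈ S, E v w → AttrIn E VR S W w) →
      AttrIn E VR S W v

/-- Every vertex of an end-component has a successor inside it. -/
lemma ec_succ {V : Type*} {E : V → V → Prop} {VR S Y : Set V}
    (h : IsECIn E VR S Y) : ∀ v ∈ Y, ∃ w ∈ Y, E v w := by
  obtain ⟨hYS, hSC, ⟨a, ha, b, hb, hab⟩, hR⟩ := h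
  intro v hv
  rcases (hSC v hv a ha).cases_head with h | ⟨c, ⟨_, hc, hvc⟩, _⟩
  · subst h; exact ⟨b, hb, hab⟩
  · exact ⟨c, hc, hvc⟩

/-- An end-component avoiding `U` is disjoint from the attractor of `U ∩ X`. -/
lemma attr_disj {V : Type*} {E : V → V → Prop} {VR X U Y : Set V}
    (hY : IsEC E VR Y) (hYX : Y ⊆ X) (hYU : Y ∩ U = ∅) :
    ∀ v, AttrIn E VR X (U ∩ X) v → v ∉ Y := by
  intro v hv
  induction hv with
  | base hvX hvU =>
      intro hvY
      exact Set.eq_empty_iff_forall_notMem.1 hYU _ ⟨hvY, hvU.1⟩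
  | rand hvX hvVR hwX hvw _ ih =>
      intro hvY
      exact ih (hY.2.2.2 _ ⟨hvY, hvVR⟩ _ (Set.mem_univ _) hvw)
  | play hvX hvVR _ ih =>
      intro hvY
      obtain ⟨w, hwY, hvw⟩ := ec_succ hY _ hvY
      exact ih w (hYX hwY) hvw hwY

/-- Every end-component of a sub-MDP is contained in some maximal one. -/
lemma exists_mec {V : Type*} [Fintype V] {E : V → V → Prop} {VR S Y : Set V}
    (hY : IsECIn E VR S Y) : ∃ M, IsMECIn E VR S M ∧ Y ⊆ M := by
  classical
  have hne : Nonempty {Z : Set V // IsECIn E VR S Z ∧ Y ⊆ Z} := ⟨⟨Y, hY, subset_rfl⟩⟩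
  obtain ⟨⟨M, hM, hYM⟩, hmax⟩ := Finite.exists_max
    (fun Z : {Z : Set V // IsECIn E VR S Z ∧ Y ⊆ Z} => Z.1.ncard)
  refine ⟨M, ⟨hM, ?_⟩, hYM⟩
  intro Z hZ hMZ
  have := hmax ⟨Z, hZ, hYM.trans hMZ⟩
  exact (Set.eq_of_subset_of_ncard_le hMZ this (Set.toFinite _)).symm

theorem stmt16 {V : Type*} [Fintype V] (E : V → V → Prop) (VR X L U : Set V)
    (hMEC : IsMEC E VR X) :
    (∃ Y : Set V, IsEC E VR Y ∧ Y ⊆ X ∧ (Y ∩ L).Nonempty ∧ Y ∩ U = ∅) ↔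
      ∃ M : Set V,
        IsMECIn E VR (X \ {v | AttrIn E VR X (U ∩ X) v}) M ∧ (M ∩ L).Nonempty := by
  set A : Set V := {v | AttrIn E VR X (U ∩ X) v} with hA
  constructor
  · rintro ⟨Y, hYEC, hYX, hYL, hYU⟩
    have hdisj := attr_disj hYEC hYX hYU
    have hYS : Y ⊆ X \ A := fun v hv => ⟨hYX hv, fun h => hdisj v h hv⟩
    have hYin : IsECIn E VR (X \ A) Y :=
      ⟨hYS, hYEC.2.1, hYEC.2.2.1,
        fun v hv w hw hvw => hYEC.2.2.2 v hv w (Set.mem_univ _) hvw⟩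
    obtain ⟨M, hM, hYM⟩ := exists_mec hYin
    obtain ⟨l, hlY, hlL⟩ := hYL
    exact ⟨M, hM, l, hYM hlY, hlL⟩
  · rintro ⟨M, ⟨hMEC', _⟩, hML⟩
    have hMS : M ⊆ X \ A := hMEC'.1
    have hMX : M ⊆ X := fun v hv => (hMS hv).1
    have hXEC := hMEC.1
    refine ⟨M, ⟨fun _ _ => Set.mem_univ _, hMEC'.2.1, hMEC'.2.2.1, ?_⟩, hMX, hML, ?_⟩
    · intro v hv w _ hvw
      have hvX : v ∈ X := hMX hv.1
      have hwX : w ∈ X := hXEC.2.2.2 v ⟨hvX, hv.2⟩ w (Set.mem_univ _) hvw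
      have hwS : w ∈ X \ A := by
        refine ⟨hwX, fun hwA => ?_⟩
        exact (hMS hv.1).2 (AttrIn.rand hvX hv.2 hwX hvw hwA)
      exact hMEC'.2.2.2 v hv w hwS hvw
    · apply Set.eq_empty_iff_forall_notMem.2
      rintro v ⟨hvM, hvU⟩
      exact (hMS hvM).2 (AttrIn.base (hMX hvM) ⟨hvU, hMX hvM⟩)
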